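/- arXiv:0810.1981 — 4 statements merged into one kernel-verified Lean document; each statement's English description precedes it below -/
import Mathlib

section
/- For every n-uniform hypergraph F with fewer than 2^(n-1) hyperedges, Breaker (the second player) has a winning strategy in the Maker–Breaker positional game on F, where Maker moves first, players alternately claim previously unclaimed vertices, and Maker wins iff he claims all vertices of some hyperedge. -/
/-!
Breaker plays greedily against the potential that gives each edge still avoiding Breaker's
vertices the weight `2 ^ #(e ∩ M)`, `M` being Maker's vertices. A Maker move `v` raises the
potential by the danger of `v` (the total weight of live edges through `v`), a Breaker move `w`
lowers it by the danger of `w`. Hence, as long as the potential plus the largest danger stays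
below `2 ^ n` on Maker's turn, Breaker can keep it so by taking the most dangerous vertex, while a
complete Maker edge alone weighs `2 ^ n`. Initially the potential is `#E` and every danger is at
most `#E`, so `#E < 2 ^ (n - 1)` suffices.
-/

def MakerWinsAux {V : Type} [DecidableEq V] (E : Finset (Finset V)) :
    ℕ → Finset V → Finset V → Prop
  | 0, M, _ => ∃ e ∈ E, e ⊆ M
  | k+1, M, U =>
      (∃ e ∈ E, e ⊆ M) ∨
      ∃ v ∈ U, (∃ e ∈ E, e ⊆ insert v M) ∨
        ((U.erase v).Nonempty ∧
          ∀ w ∈ U.erase v, MakerWinsAux E k (insert v M) ((U.erase v).erase w))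

/-- Maker (moving first) has a winning strategy in the Maker-Breaker game on the
hypergraph with edge set `E`, played on the board `B`. -/
def MakerWins {V : Type} [DecidableEq V] (E : Finset (Finset V)) (B : Finset V) : Prop :=
  MakerWinsAux E B.card ∅ B

open Finset

namespace MakerBreaker

variable {V : Type} [DecidableEq V] (E : Finset (Finset V))

/-- Breaker owns the vertices outside `M ∪ U`. -/
def liveEdges (M U : Finset V) : Finset (Finset V) := E.filter (· ⊆ M ∪ U)

def potential (M U : Finset V) : ℕ := ∑ e ∈ liveEdges E M U, 2 ^ #(e ∩ M)

def danger (M U : Finset V) (v : V) : ℕ :=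
  ∑ e ∈ liveEdges E M U with v ∈ e, 2 ^ #(e ∩ M)

variable {E}

lemma pow_card_le_potential {M U e : Finset V} (he : e ∈ E) (heM : e ⊆ M) :
    2 ^ #e ≤ potential E M U := by
  have hlive : e ∈ liveEdges E M U := mem_filter.mpr ⟨he, heM.trans subset_union_left⟩
  calc 2 ^ #e = 2 ^ #(e ∩ M) := by rw [inter_eq_left.mpr heM]
    _ ≤ potential E M U :=
      single_le_sum (f := fun e => 2 ^ #(e ∩ M)) (fun _ _ => Nat.zero_le _) hlive

lemma danger_le_potential (M U : Finset V) (v : V) : danger E M U v ≤ potential E M U :=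
  sum_le_sum_of_subset (filter_subset _ _)

lemma danger_mono {M U U' : Finset V} (h : U' ⊆ U) (v : V) :
    danger E M U' v ≤ danger E M U v := by
  refine sum_le_sum_of_subset (filter_subset_filter _ fun e he => ?_)
  simp only [liveEdges, mem_filter] at he ⊢
  exact ⟨he.1, he.2.trans (union_subset_union_right h)⟩

lemma potential_insert_erase {M U : Finset V} {v : V} (hvU : v ∈ U) (hvM : v ∉ M) :
    potential E (insert v M) (U.erase v) = potential E M U + danger E M U v := by
  have hlive : liveEdges E (insert v M) (U.erase v) = liveEdges E M U := by
    rw [liveEdges, insert_union, ← union_insert, insert_erase hvU, liveEdges]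
  have hweight : ∀ e : Finset V, 2 ^ #(e ∩ insert v M) =
      2 ^ #(e ∩ M) + if v ∈ e then 2 ^ #(e ∩ M) else 0 := by
    intro e
    by_cases hve : v ∈ e
    · rw [inter_insert_of_mem hve, card_insert_of_notMem (by simp [hvM]), if_pos hve, pow_succ]
      ring
    · rw [inter_insert_of_notMem hve, if_neg hve, add_zero]
  rw [potential, hlive, sum_congr rfl fun e _ => hweight e, sum_add_distrib, danger, sum_filter,
    potential]

lemma potential_erase_add_danger {M U : Finset V} {w : V} (hwM : w ∉ M) :
    potential E M (U.erase w) + danger E M U w = potential E M U := by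
  have hlive : liveEdges E M (U.erase w) = (liveEdges E M U).filter (w ∉ ·) := by
    ext e
    simp only [liveEdges, mem_filter, subset_iff, mem_union, mem_erase]
    constructor
    · rintro ⟨he, hsub⟩
      exact ⟨⟨he, fun x hx => (hsub hx).imp_right And.right⟩,
        fun hwe => (hsub hwe).elim hwM (·.1 rfl)⟩
    · rintro ⟨⟨he, hsub⟩, hwe⟩
      exact ⟨he, fun x hx =>
        (hsub hx).imp_right fun hxU => ⟨by rintro rfl; exact hwe hx, hxU⟩⟩
  rw [potential, hlive, danger, add_comm, sum_filter_add_sum_filter_not, potential]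

lemma potential_add_sup_danger_erase_le {M U : Finset V} {w : V} (hwM : w ∉ M)
    (hmax : ∀ u ∈ U, danger E M U u ≤ danger E M U w) :
    potential E M (U.erase w) + (U.erase w).sup (danger E M (U.erase w)) ≤ potential E M U := by
  have hsup : (U.erase w).sup (danger E M (U.erase w)) ≤ danger E M U w :=
    Finset.sup_le fun u hu =>
      (danger_mono (erase_subset w U) u).trans (hmax u (mem_of_mem_erase hu))
  have := potential_erase_add_danger (E := E) (U := U) hwM
  omega

theorem not_makerWinsAux {n : ℕ} (hunif : ∀ e ∈ E, #e = n) (k : ℕ) {M U : Finset V}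
    (hdis : Disjoint M U) (hsafe : potential E M U + U.sup (danger E M U) < 2 ^ n) :
    ¬ MakerWinsAux E k M U := by
  have no_edge : ∀ {M} (U : Finset V), potential E M U < 2 ^ n → ¬ ∃ e ∈ E, e ⊆ M := by
    rintro M U hlt ⟨e, he, heM⟩
    exact (pow_card_le_potential he heM).not_gt (hunif e he ▸ hlt)
  induction k generalizing M U with
  | zero => exact no_edge U (by omega)
  | succ k ih =>
    rintro (hwon | ⟨v, hvU, hnext⟩)
    · exact no_edge U (by omega) hwon
    have hvM : v ∉ M := disjoint_right.mp hdis hvU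
    have hmaker : potential E (insert v M) (U.erase v) < 2 ^ n := by
      have := le_sup (f := danger E M U) hvU
      rw [potential_insert_erase hvU hvM]
      omega
    rcases hnext with hwon | ⟨hne, hreplies⟩
    · exact no_edge _ hmaker hwon
    obtain ⟨w, hw, hwmax⟩ :=
      exists_max_image (U.erase v) (danger E (insert v M) (U.erase v)) hne
    have hwM : w ∉ insert v M := by
      simp only [mem_insert, not_or]
      exact ⟨ne_of_mem_erase hw, disjoint_right.mp hdis (mem_of_mem_erase hw)⟩
    refine ih ?_ ?_ (hreplies w hw)
    · rw [disjoint_insert_left]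
      exact ⟨fun h => notMem_erase v U (mem_of_mem_erase h),
        hdis.mono_right ((erase_subset _ _).trans (erase_subset _ _))⟩
    · have := potential_add_sup_danger_erase_le hwM hwmax
      omega

lemma potential_empty_univ [Fintype V] : potential E ∅ univ = #E := by
  simp [potential, liveEdges]

end MakerBreaker

open MakerBreaker in
/-- Erdős–Selfridge: every `n`-uniform hypergraph with fewer than `2^(n-1)`
hyperedges is a Breaker's win (Maker moving first has no winning strategy). -/
theorem erdos_selfridge {V : Type} [Fintype V] [DecidableEq V] (n : ℕ)
    (E : Finset (Finset V)) (hunif : ∀ e ∈ E, e.card = n)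
    (hcard : E.card < 2 ^ (n - 1)) :
    ¬ MakerWins E (Finset.univ : Finset V) := by
  have htwice : 2 * #E < 2 ^ n := by
    cases n with
    | zero => simp_all
    | succ n => rw [Nat.add_sub_cancel] at hcard; rw [pow_succ]; omega
  have hdanger : univ.sup (danger E ∅ univ) ≤ #E :=
    Finset.sup_le fun v _ => potential_empty_univ (E := E) ▸ danger_le_potential ∅ univ v
  refine not_makerWinsAux hunif _ (disjoint_empty_left _) ?_
  rw [potential_empty_univ]
  omega
end

section
/- Let T be a rooted binary tree with n levels (every internal node has exactly two children and every root-to-leaf path has n vertices), and let G be the n-uniform hypergraph on the vertices of T whose hyperedges are exactly the vertex sets of root-to-leaf paths. Then G has exactly 2^(n-1) hyperedges and Maker has a winning strategy on G. -/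
/-- The finset of all boolean lists of length `k` (nodes on level `k` of the
complete infinite rooted binary tree). -/
def listsOfLen : ℕ → Finset (List Bool)
  | 0 => {[]}
  | k+1 => (listsOfLen k).image (· ++ [true]) ∪ (listsOfLen k).image (· ++ [false])

/-- The vertex set of the full branch (root-to-`l` path) ending at the node `l`. -/
def prefixesF (l : List Bool) : Finset (List Bool) :=
  (Finset.range (l.length + 1)).image (fun i => l.take i)

/-- The vertex set of the level-descending path starting at node `p` and
ending at node `p ++ q`. -/
def pathFinset (p q : List Bool) : Finset (List Bool) :=
  (Finset.range (q.length + 1)).image (fun i => p ++ q.take i)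

/-- `S` is (the node set of) a rooted binary tree: it contains the root, is
prefix-closed, and every node has either zero or two children. -/
def IsBinTree (S : Finset (List Bool)) : Prop :=
  [] ∈ S ∧ (∀ l ∈ S, ∀ p : List Bool, p <+: l → p ∈ S) ∧
    ∀ l ∈ S, ((l ++ [true]) ∈ S ↔ (l ++ [false]) ∈ S)

/-- `l` is a leaf of the tree `S`. -/
def IsLeaf (S : Finset (List Bool)) (l : List Bool) : Prop :=
  l ∈ S ∧ (l ++ [true]) ∉ S ∧ (l ++ [false]) ∉ S

/-- The edge `e` is a level-descending path inside the tree `S`. -/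
def InTree (S : Finset (List Bool)) (e : Finset (List Bool)) : Prop :=
  ∃ p q : List Bool, (p ++ q) ∈ S ∧ e = pathFinset p q

/-!
Maker walks down the tree along a branch he owns. After Maker claims a node `p` and Breaker
answers with some node `w`, at least one child of `p` is not an ancestor of `w` (two children
cannot both be prefixes of `w`), so the whole subtree below that child is still unclaimed and
Maker continues there. After `n` moves he owns a full root-to-leaf branch.
-/

lemma mem_listsOfLen {l : List Bool} {k : ℕ} : l ∈ listsOfLen k ↔ l.length = k := by
  induction k generalizing l with
  | zero => simp [listsOfLen]
  | succ k ih =>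
    simp only [listsOfLen, Finset.mem_union, Finset.mem_image]
    constructor
    · rintro (⟨a, ha, rfl⟩ | ⟨a, ha, rfl⟩) <;> simp [ih.1 ha]
    · intro hl
      rcases l.eq_nil_or_concat with rfl | ⟨a, b, rfl⟩
      · simp at hl
      · have ha : a ∈ listsOfLen k := ih.2 (by simpa using hl)
        cases b
        · exact Or.inr ⟨a, ha, List.concat_eq_append.symm⟩
        · exact Or.inl ⟨a, ha, List.concat_eq_append.symm⟩

lemma card_listsOfLen (k : ℕ) : (listsOfLen k).card = 2 ^ k := by
  have : listsOfLen k = (Finset.univ : Finset (List.Vector Bool k)).map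
      ⟨List.Vector.toList, List.Vector.toList_injective⟩ := by
    ext l
    rw [mem_listsOfLen, Finset.mem_map]
    exact ⟨fun h => ⟨⟨l, h⟩, Finset.mem_univ _, rfl⟩, fun ⟨v, _, hv⟩ => hv ▸ v.toList_length⟩
  rw [this, Finset.card_map, Finset.card_univ, card_vector, Fintype.card_bool]

lemma card_biUnion_listsOfLen (n : ℕ) :
    ((Finset.range n).biUnion listsOfLen).card = 2 ^ n - 1 := by
  rw [Finset.card_biUnion]
  · simp [card_listsOfLen, Nat.geomSum_eq le_rfl]
  · intro i _ j _ hij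
    exact Finset.disjoint_left.2 fun l hi hj =>
      hij ((mem_listsOfLen.1 hi).symm.trans (mem_listsOfLen.1 hj))

lemma mem_prefixesF {x l : List Bool} : x ∈ prefixesF l ↔ x <+: l := by
  simp only [prefixesF, Finset.mem_image, Finset.mem_range]
  constructor
  · rintro ⟨i, -, rfl⟩
    exact List.take_prefix i l
  · intro h
    exact ⟨x.length, Nat.lt_succ_of_le h.length_le, (List.prefix_iff_eq_take.1 h).symm⟩

lemma prefixesF_injective : Function.Injective prefixesF := fun a b h =>
  have hab : a <+: b := mem_prefixesF.1 (h ▸ mem_prefixesF.2 List.prefix_rfl)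
  have hba : b <+: a := mem_prefixesF.1 (h ▸ mem_prefixesF.2 List.prefix_rfl)
  hab.eq_of_length (le_antisymm hab.length_le hba.length_le)

lemma prefixesF_concat (p : List Bool) (t : Bool) :
    prefixesF (p ++ [t]) = insert (p ++ [t]) (prefixesF p) := by
  ext x
  simp [mem_prefixesF, List.prefix_concat_iff]

lemma exists_child_not_prefix (p w : List Bool) : ∃ t : Bool, ¬ p ++ [t] <+: w := by
  by_contra! h
  have key : ∀ t : Bool, p ++ [t] = w.take (p.length + 1) := fun t => by
    simpa using List.prefix_iff_eq_take.1 (h t)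
  simpa using (key true).trans (key false).symm

/-- `prefixesF p ⊆ insert p M` says that Maker owns every proper ancestor of `p`; he claims `p`
next. -/
theorem makerWinsAux_of_subtree_free {d : ℕ} {E : Finset (Finset (List Bool))}
    (hE : ∀ l : List Bool, l.length = d → prefixesF l ∈ E) {k : ℕ} :
    ∀ {p : List Bool} {M U : Finset (List Bool)}, d < p.length + k → p.length ≤ d →
      prefixesF p ⊆ insert p M → (∀ x, p <+: x → x.length ≤ d → x ∈ U) →
      MakerWinsAux E k M U := by
  induction k with
  | zero => intro p M U hk hp; omega
  | succ k ih =>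
    intro p M U hk hp hM hU
    refine Or.inr ⟨p, hU p List.prefix_rfl hp, ?_⟩
    rcases hp.eq_or_lt with hleaf | hinner
    · exact Or.inl ⟨prefixesF p, hE p hleaf, hM⟩
    refine Or.inr ⟨⟨p ++ [true], Finset.mem_erase.2 ⟨by simp, hU _ (by simp) (by simpa)⟩⟩, ?_⟩
    intro w _
    obtain ⟨t, ht⟩ := exists_child_not_prefix p w
    refine ih (p := p ++ [t]) (by simp only [List.length_append, List.length_singleton]; omega) (by simpa using hinner) ?_ ?_
    · rw [prefixesF_concat]
      exact Finset.insert_subset_insert _ hM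
    · intro x hpx hxd
      refine Finset.mem_erase.2 ⟨fun hxw => ht (hxw ▸ hpx), Finset.mem_erase.2 ⟨?_, ?_⟩⟩
      · rintro rfl
        simpa using hpx.length_le
      · exact hU x ((List.prefix_append p [t]).trans hpx) hxd

/-- On the complete binary tree with `n` levels, the `n`-uniform hypergraph whose
hyperedges are the root-to-leaf paths has exactly `2^(n-1)` hyperedges,
and Maker has a winning strategy on it. -/
theorem binary_tree_game (n : ℕ) (hn : 1 ≤ n) :
    ((listsOfLen (n - 1)).image prefixesF).card = 2 ^ (n - 1) ∧
    MakerWins ((listsOfLen (n - 1)).image prefixesF)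
      ((Finset.range n).biUnion listsOfLen) := by
  refine ⟨by rw [Finset.card_image_of_injective _ prefixesF_injective, card_listsOfLen], ?_⟩
  have hcard : n - 1 < 2 ^ n - 1 := by
    have := Nat.lt_two_pow_self (n := n)
    omega
  refine makerWinsAux_of_subtree_free (p := [])
    (fun l hl => Finset.mem_image_of_mem _ (mem_listsOfLen.2 hl))
    (by simpa [card_biUnion_listsOfLen] using hcard) (Nat.zero_le _) (by decide) ?_
  intro x _ hx
  exact Finset.mem_biUnion.2 ⟨x.length, Finset.mem_range.2 (by omega), mem_listsOfLen.2 rfl⟩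
end

section
/- Let G be a hypergraph whose vertex set is the vertex set of a complete rooted binary tree T such that every hyperedge of G is the vertex set of a path in T descending along levels, and suppose every full branch (root-to-leaf path) of T contains a hyperedge of G as a subpath. Then Maker has a winning strategy in the Maker–Breaker game on G. -/
lemma mem_listsOfLen_of_length : ∀ l : List Bool, l ∈ listsOfLen l.length := by
  intro l
  induction l using List.reverseRecOn with
  | nil => simp [listsOfLen]
  | append_singleton l b ih =>
      have : (l ++ [b]).length = l.length + 1 := by simp
      rw [this, listsOfLen]
      cases b
      · exact Finset.mem_union_right _ (Finset.mem_image_of_mem _ ih)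
      · exact Finset.mem_union_left _ (Finset.mem_image_of_mem _ ih)

lemma makerAux (h : ℕ) (E : Finset (Finset (List Bool)))
    (hbranch : ∀ l ∈ listsOfLen h, ∃ e ∈ E, e ⊆ prefixesF l) :
    ∀ r k (v : List Bool) (M U : Finset (List Bool)),
      v.length + r = h → r + 1 ≤ k →
      (∀ p : List Bool, p <+: v → p ≠ v → p ∈ M) →
      (∀ u : List Bool, v <+: u → u.length ≤ h → u ∈ U) →
      MakerWinsAux E k M U := by
  intro r
  induction r with
  | zero =>
      intro k v M U hlen hk hM hU
      obtain ⟨k, rfl⟩ : ∃ k', k = k' + 1 := ⟨k - 1, by omega⟩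
      rw [MakerWinsAux]
      right
      refine ⟨v, hU v List.prefix_rfl (by omega), Or.inl ?_⟩
      have hvmem : v ∈ listsOfLen h := by
        have := mem_listsOfLen_of_length v
        rwa [show v.length = h by omega] at this
      obtain ⟨e, he, hsub⟩ := hbranch v hvmem
      refine ⟨e, he, fun x hx => ?_⟩
      have hx' := hsub hx
      simp only [prefixesF, Finset.mem_image, Finset.mem_range] at hx'
      obtain ⟨i, hi, rfl⟩ := hx'
      rcases eq_or_lt_of_le (Nat.lt_succ_iff.mp hi) with heq | hlt
      · rw [heq, List.take_length]
        exact Finset.mem_insert_self _ _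
      · refine Finset.mem_insert_of_mem (hM _ (List.take_prefix _ _) ?_)
        intro hcontra
        have := congrArg List.length hcontra
        simp [List.length_take] at this
        omega
  | succ r ih =>
      intro k v M U hlen hk hM hU
      obtain ⟨k, rfl⟩ : ∃ k', k = k' + 1 := ⟨k - 1, by omega⟩
      rw [MakerWinsAux]
      right
      refine ⟨v, hU v List.prefix_rfl (by omega), Or.inr ⟨?_, ?_⟩⟩
      · refine ⟨v ++ [true], Finset.mem_erase.mpr ⟨by simp, hU _ ⟨[true], rfl⟩ ?_⟩⟩
        simp; omega
      · intro w hw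
        set b : Bool := if (v ++ [true]) <+: w then false else true with hb
        have hcw : ¬ (v ++ [b]) <+: w := by
          by_cases ht : (v ++ [true]) <+: w
          · rw [hb, if_pos ht]
            intro hf
            have : (v ++ [false]) <+: (v ++ [true]) :=
              List.prefix_of_prefix_length_le hf ht (by simp)
            have := this.eq_of_length (by simp)
            simp at this
          · rw [hb, if_neg ht]; exact ht
        have hvb : v <+: v ++ [b] := ⟨[b], rfl⟩
        apply ih k (v ++ [b]) (insert v M) ((U.erase v).erase w)
        · simp; omega
        · omega
        · intro p hp hpne
          rcases eq_or_ne p v with rfl | hpv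
          · exact Finset.mem_insert_self _ _
          · refine Finset.mem_insert_of_mem (hM p ?_ hpv)
            have hlp : p.length ≤ v.length := by
              have h1 := hp.length_le
              simp at h1
              rcases eq_or_lt_of_le h1 with heq | hlt
              · exact absurd (hp.eq_of_length (by simp [heq])) hpne
              · omega
            exact List.prefix_of_prefix_length_le hp hvb hlp
        · intro u hcu hule
          have hvu : v <+: u := hvb.trans hcu
          refine Finset.mem_erase.mpr ⟨?_, Finset.mem_erase.mpr ⟨?_, hU u hvu hule⟩⟩
          · rintro rfl; exact hcw hcu
          · intro huv
            have := hcu.length_le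
            rw [huv] at this
            simp at this

/-- If every hyperedge of `E` is a level-descending path in the complete binary
tree of height `h` and every full branch contains a hyperedge, then Maker wins. -/
theorem maker_wins_of_every_branch_contains_edge (h : ℕ)
    (E : Finset (Finset (List Bool)))
    (hpath : ∀ e ∈ E, ∃ p q : List Bool, (p ++ q).length ≤ h ∧ e = pathFinset p q)
    (hbranch : ∀ l ∈ listsOfLen h, ∃ e ∈ E, e ⊆ prefixesF l) :
    MakerWins E ((Finset.range (h + 1)).biUnion listsOfLen) := by
  have hcard : h + 1 ≤ ((Finset.range (h + 1)).biUnion listsOfLen).card := by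
    have hmap : ∀ i ∈ Finset.range (h + 1),
        List.replicate i true ∈ (Finset.range (h + 1)).biUnion listsOfLen := by
      intro i hi
      refine Finset.mem_biUnion.mpr ⟨i, hi, ?_⟩
      have := mem_listsOfLen_of_length (List.replicate i true)
      rwa [List.length_replicate] at this
    have hinj : Set.InjOn (fun i => List.replicate i true) (Finset.range (h + 1)) := by
      intro i _ j _ hij
      have := congrArg List.length hij
      simpa using this
    have := Finset.card_le_card_of_injOn _ hmap hinj
    simpa using this
  unfold MakerWins
  apply makerAux h E hbranch h _ [] ∅ _
  · simp
  · exact hcard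
  · intro p hp hpne
    exact absurd (List.prefix_nil.mp hp) hpne
  · intro u _ hu
    exact Finset.mem_biUnion.mpr ⟨u.length, Finset.mem_range.mpr (by omega),
      mem_listsOfLen_of_length u⟩
end

section
/- Every n-uniform hypergraph F with an even number of vertices and maximum degree at most 2^(n-2)/(e·n) admits a proper halving 2-coloring: a red/blue coloring of its vertices in which no hyperedge is monochromatic and the numbers of red and blue vertices are equal. -/
/-!
Since `|V|` is even we can pair up the vertices and give the two vertices of each pair opposite
colours, choosing independently and uniformly at random which of them is `true`; every such
colouring is halving. An edge with `n` vertices is then monochromatic with probability at most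
`2^(1-n)`, and this event is determined by the pairs meeting the edge, so it is mutually
independent of the events of all edges but the at most `2nΔ` meeting the same pairs. The symmetric
Lovász Local Lemma applies as soon as `e · 2^(1-n) · 2nΔ ≤ 1`, i.e. `Δ ≤ 2^(n-2)/(en)`.
-/

open Finset

namespace LocalLemma

variable {Ω ι : Type*} [Fintype Ω] [DecidableEq Ω] [DecidableEq ι] (A : ι → Finset Ω)

def avoiding (S : Finset ι) : Finset Ω := {ω | ∀ j ∈ S, ω ∉ A j}

variable {A}

lemma avoiding_insert (j : ι) (S : Finset ι) :
    avoiding A (insert j S) = avoiding A S \ A j := by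
  ext ω
  simp only [avoiding, mem_filter, mem_univ, true_and, mem_sdiff, forall_mem_insert]
  tauto

omit [DecidableEq ι] in
lemma avoiding_anti {S T : Finset ι} (h : S ⊆ T) : avoiding A T ⊆ avoiding A S :=
  fun _ hω => by
    simp only [avoiding, mem_filter, mem_univ, true_and] at hω ⊢
    exact fun j hj => hω j (h hj)

lemma one_sub_mul_card_avoiding_le {x : ℝ} {j : ι} {S : Finset ι}
    (hj : (#(A j ∩ avoiding A S) : ℝ) ≤ x * #(avoiding A S)) :
    (1 - x) * #(avoiding A S) ≤ #(avoiding A (insert j S)) := by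
  have hsplit : (#(avoiding A S) : ℝ) = #(A j ∩ avoiding A S) + #(avoiding A S \ A j) := by
    rw [inter_comm]; exact_mod_cast (card_inter_add_card_sdiff _ _).symm
  rw [avoiding_insert]
  rw [hsplit] at hj ⊢
  linarith

lemma pow_mul_card_avoiding_le {x : ℝ} (hx : x ≤ 1) (R : Finset ι) :
    ∀ T : Finset ι, (∀ U ⊆ T, ∀ j ∈ T, j ∉ U →
      (#(A j ∩ avoiding A (U ∪ R)) : ℝ) ≤ x * #(avoiding A (U ∪ R))) →
    (1 - x) ^ #T * #(avoiding A R) ≤ #(avoiding A (T ∪ R)) := by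
  intro T
  induction T using Finset.induction_on with
  | empty => simp
  | insert j T hj ih =>
    intro h
    have hT := ih fun U hU i hi => h U (hU.trans (subset_insert j T)) i (mem_insert_of_mem hi)
    calc (1 - x) ^ #(insert j T) * #(avoiding A R)
        = (1 - x) * ((1 - x) ^ #T * #(avoiding A R)) := by
          rw [card_insert_of_notMem hj, pow_succ', mul_assoc]
      _ ≤ (1 - x) * #(avoiding A (T ∪ R)) := by gcongr
      _ ≤ #(avoiding A (insert j T ∪ R)) := by
        rw [insert_union]
        exact one_sub_mul_card_avoiding_le (h T (subset_insert j T) j (mem_insert_self j T) hj)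

variable [Nonempty Ω] {Γ : ι → Finset ι} {d : ℕ} {x : ℝ}

theorem card_inter_avoiding_le (hx0 : 0 ≤ x) (hx1 : x ≤ 1)
    (hΓ : ∀ i, #((Γ i).erase i) ≤ d)
    (hA : ∀ i, (#(A i) : ℝ) ≤ x * (1 - x) ^ d * Fintype.card Ω)
    (hindep : ∀ i S, Disjoint S (Γ i) →
      (#(A i ∩ avoiding A S) : ℝ) * Fintype.card Ω ≤ #(A i) * #(avoiding A S))
    (S : Finset ι) : ∀ i ∉ S, (#(A i ∩ avoiding A S) : ℝ) ≤ x * #(avoiding A S) := by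
  induction S using Finset.strongInduction with
  | H S ih =>
  intro i hi
  set near := S ∩ Γ i
  set far := S \ Γ i
  have hS : near ∪ far = S := sup_inf_sdiff S (Γ i)
  have hnear : #near ≤ d := (card_le_card fun j hj => mem_erase.2
    ⟨by rintro rfl; exact hi (mem_inter.1 hj).1, (mem_inter.1 hj).2⟩).trans (hΓ i)
  have hfar : (1 - x) ^ #near * #(avoiding A far) ≤ #(avoiding A S) := by
    rw [← hS]
    refine pow_mul_card_avoiding_le hx1 far near fun U hU j hj hjU => ?_
    have hj_far : j ∉ far := fun h => (mem_sdiff.1 h).2 (mem_inter.1 hj).2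
    have hj_out : j ∉ U ∪ far := by simp [hjU, hj_far]
    refine ih _ ((ssubset_iff_of_subset ?_).2 ⟨j, hS ▸ mem_union_left _ hj, hj_out⟩) j hj_out
    rw [← hS]; exact union_subset_union hU subset_rfl
  have hΩ : (0 : ℝ) < Fintype.card Ω := by exact_mod_cast Fintype.card_pos
  refine le_of_mul_le_mul_right ?_ hΩ
  calc (#(A i ∩ avoiding A S) : ℝ) * Fintype.card Ω
      ≤ #(A i ∩ avoiding A far) * Fintype.card Ω := by
        gcongr; exact avoiding_anti sdiff_subset
    _ ≤ #(A i) * #(avoiding A far) := hindep i far sdiff_disjoint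
    _ ≤ x * (1 - x) ^ d * Fintype.card Ω * #(avoiding A far) := by gcongr; exact hA i
    _ ≤ x * (1 - x) ^ #near * Fintype.card Ω * #(avoiding A far) := by
        gcongr x * ?_ * _ * _
        exact pow_le_pow_of_le_one (by linarith) (by linarith) hnear
    _ = x * Fintype.card Ω * ((1 - x) ^ #near * #(avoiding A far)) := by ring
    _ ≤ x * Fintype.card Ω * #(avoiding A S) := by gcongr
    _ = x * #(avoiding A S) * Fintype.card Ω := by ring

theorem exists_forall_notMem [Fintype ι] (hx0 : 0 ≤ x) (hx1 : x < 1)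
    (hΓ : ∀ i, #((Γ i).erase i) ≤ d)
    (hA : ∀ i, (#(A i) : ℝ) ≤ x * (1 - x) ^ d * Fintype.card Ω)
    (hindep : ∀ i S, Disjoint S (Γ i) →
      (#(A i ∩ avoiding A S) : ℝ) * Fintype.card Ω ≤ #(A i) * #(avoiding A S)) :
    ∃ ω, ∀ i, ω ∉ A i := by
  have hlow := pow_mul_card_avoiding_le hx1.le ∅ univ fun U _ j _ hj =>
    card_inter_avoiding_le hx0 hx1.le hΓ hA hindep _ j (by simpa using hj)
  have hpos : (0 : ℝ) < (1 - x) ^ #(univ : Finset ι) * #(avoiding A ∅) := by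
    have : avoiding A (∅ : Finset ι) = univ := by simp [avoiding]
    rw [this, card_univ]
    have : 0 < 1 - x := by linarith
    positivity
  obtain ⟨ω, hω⟩ := card_pos.1 (by exact_mod_cast hpos.trans_le hlow)
  exact ⟨ω, by simpa [avoiding] using hω⟩

lemma inv_exp_one_le_one_sub_inv_pow (d : ℕ) : (Real.exp 1)⁻¹ ≤ (1 - ((d : ℝ) + 1)⁻¹) ^ d := by
  rcases d.eq_zero_or_pos with rfl | hd
  · simpa using inv_le_one_of_one_le₀ (Real.one_le_exp zero_le_one)
  have : 1 - ((d : ℝ) + 1)⁻¹ = (1 + (d : ℝ)⁻¹)⁻¹ := by field_simp; ring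
  rw [this, inv_pow]
  exact inv_anti₀ (by positivity) Real.one_add_inv_pow_le_exp

theorem exists_forall_notMem_of_exp_mul_le [Fintype ι] (hΓ : ∀ i, #((Γ i).erase i) ≤ d)
    (hA : ∀ i, Real.exp 1 * (d + 1) * #(A i) ≤ Fintype.card Ω)
    (hindep : ∀ i S, Disjoint S (Γ i) →
      (#(A i ∩ avoiding A S) : ℝ) * Fintype.card Ω ≤ #(A i) * #(avoiding A S)) :
    ∃ ω, ∀ i, ω ∉ A i := by
  -- `x = 1 / (d + 2)` rather than the usual `1 / (d + 1)`, so that `x < 1` also when `d = 0`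
  refine exists_forall_notMem (x := ((d : ℝ) + 2)⁻¹) (by positivity)
    (inv_lt_one_of_one_lt₀ (by linarith [d.cast_nonneg (α := ℝ)])) hΓ (fun i => ?_) hindep
  have hE := inv_exp_one_le_one_sub_inv_pow (d + 1)
  calc (#(A i) : ℝ) ≤ Fintype.card Ω / (Real.exp 1 * (d + 1)) := by
        rw [le_div_iff₀' (by positivity)]; exact hA i
    _ = ((d : ℝ) + 1)⁻¹ * (Real.exp 1)⁻¹ * Fintype.card Ω := by field_simp
    _ ≤ ((d : ℝ) + 1)⁻¹ * (1 - (((d + 1 : ℕ) : ℝ) + 1)⁻¹) ^ (d + 1) * Fintype.card Ω := by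
        gcongr
    _ = ((d : ℝ) + 2)⁻¹ * (1 - ((d : ℝ) + 2)⁻¹) ^ d * Fintype.card Ω := by
        have hsucc : ((d + 1 : ℕ) : ℝ) + 1 = d + 2 := by push_cast; ring
        have hsub : 1 - ((d : ℝ) + 2)⁻¹ = (d + 1) / (d + 2) := by field_simp; ring
        rw [hsucc, pow_succ, hsub]
        field_simp

end LocalLemma

section ProductSpace

variable {κ β : Type*} [Fintype κ] [DecidableEq κ] [Fintype β] [DecidableEq β]

theorem card_inter_mul_card_eq_of_dependsOn (s : Finset κ) (P Q : Finset (κ → β))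
    (hP : ∀ ω ω', (∀ i ∈ s, ω i = ω' i) → ω ∈ P → ω' ∈ P)
    (hQ : ∀ ω ω', (∀ i ∉ s, ω i = ω' i) → ω ∈ Q → ω' ∈ Q) :
    #(P ∩ Q) * Fintype.card (κ → β) = #P * #Q := by
  rw [← card_univ, ← card_product, ← card_product]
  let swap (p : (κ → β) × (κ → β)) := (s.piecewise p.1 p.2, s.piecewise p.2 p.1)
  have hswap : ∀ p, swap (swap p) = p := fun p => by
    ext i <;> by_cases hi : i ∈ s <;> simp [swap, hi]
  refine card_nbij' swap swap (fun p hp => ?_) (fun p hp => ?_) (fun p _ => hswap p)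
    (fun p _ => hswap p)
  · simp only [coe_product, coe_inter, Set.mem_prod, Set.mem_inter_iff, mem_coe] at hp ⊢
    exact ⟨hP _ _ (fun i hi => by simp [swap, hi]) hp.1.1,
      hQ _ _ (fun i hi => by simp [swap, hi]) hp.1.2⟩
  · simp only [coe_product, coe_inter, Set.mem_prod, Set.mem_inter_iff, mem_coe,
      coe_univ, Set.mem_univ, and_true] at hp ⊢
    exact ⟨hP _ _ (fun i hi => by simp [swap, hi]) hp.1,
      hQ _ _ (fun i hi => by simp [swap, hi]) hp.2⟩

theorem card_filter_eqOn_mul_pow (s : Finset κ) (g : κ → β) :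
    #{ω : κ → β | ∀ i ∈ s, ω i = g i} * Fintype.card β ^ #s = Fintype.card β ^ Fintype.card κ := by
  have : ({ω : κ → β | ∀ i ∈ s, ω i = g i} : Finset _)
      = Fintype.piFinset fun i => if i ∈ s then {g i} else univ := by
    ext ω
    simp only [mem_filter, mem_univ, true_and, Fintype.mem_piFinset]
    refine forall_congr' fun i => ?_
    split_ifs with hi <;> simp [hi]
  rw [this, Fintype.card_piFinset]
  simp only [apply_ite card, card_singleton, card_univ, prod_ite, prod_const_one, one_mul,
    prod_const, ← pow_add]
  congr 1
  rw [← card_compl_add_card s, compl_eq_univ_sdiff, filter_notMem_eq_sdiff, add_comm]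

end ProductSpace

section PairedColoring

variable {V κ : Type*} (φ : V ≃ κ × Bool)

/-- `φ` pairs up the vertices: pair `j` is `{φ.symm (j, false), φ.symm (j, true)}`. -/
def pairedColoring (ω : κ → Bool) (v : V) : Bool := xor (ω (φ v).1) (φ v).2

theorem card_pairedColoring_true [Fintype V] (ω : κ → Bool) :
    #{v | pairedColoring φ ω v = true} = #{v | pairedColoring φ ω v = false} := by
  let flip : V ≃ V := (φ.trans ((Equiv.refl κ).prodCongr Equiv.boolNot)).trans φ.symm
  exact card_equiv flip fun v => by simp [flip, pairedColoring, Bool.eq_not_iff]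

variable [DecidableEq κ]

def pairIndices (e : Finset V) : Finset κ := e.image fun v => (φ v).1

variable {φ} in
theorem card_filter_not_disjoint_pairIndices_le [DecidableEq V] (E : Finset (Finset V))
    (e : Finset V) {D : ℕ} (hdeg : ∀ v, #{f ∈ E | v ∈ f} ≤ D) :
    #{f ∈ E | ¬Disjoint (pairIndices φ e) (pairIndices φ f)} ≤ 2 * #e * D := by
  let partners : Finset V := (pairIndices φ e ×ˢ univ).image φ.symm
  have hpartners : #partners ≤ 2 * #e := calc
    #partners ≤ #(pairIndices φ e ×ˢ (univ : Finset Bool)) := card_image_le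
    _ ≤ 2 * #e := by
      rw [card_product, card_univ, Fintype.card_bool, mul_comm]
      gcongr; exact card_image_le
  have hsub : {f ∈ E | ¬Disjoint (pairIndices φ e) (pairIndices φ f)}
      ⊆ partners.biUnion fun w => {f ∈ E | w ∈ f} := by
    intro f hf
    obtain ⟨hfE, hmeet⟩ := mem_filter.1 hf
    obtain ⟨i, hie, hif⟩ := not_disjoint_iff.1 hmeet
    obtain ⟨w, hw, rfl⟩ := mem_image.1 hif
    refine mem_biUnion.2 ⟨w, mem_image.2 ⟨φ w, ?_, φ.symm_apply_apply w⟩, mem_filter.2 ⟨hfE, hw⟩⟩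
    exact mem_product.2 ⟨hie, mem_univ _⟩
  calc #{f ∈ E | ¬Disjoint (pairIndices φ e) (pairIndices φ f)}
      ≤ ∑ w ∈ partners, #{f ∈ E | w ∈ f} := (card_le_card hsub).trans card_biUnion_le
    _ ≤ #partners * D := by simpa using sum_le_sum fun w _ => hdeg w
    _ ≤ 2 * #e * D := by gcongr

variable [Fintype κ]

def monochromatic (e : Finset V) : Finset (κ → Bool) :=
  {ω | ∀ v ∈ e, ∀ w ∈ e, pairedColoring φ ω v = pairedColoring φ ω w}

variable {φ}

theorem mem_monochromatic_of_eqOn {e : Finset V} {ω ω' : κ → Bool}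
    (h : ∀ i ∈ pairIndices φ e, ω i = ω' i) (hω : ω ∈ monochromatic φ e) :
    ω' ∈ monochromatic φ e := by
  have hagree : ∀ v ∈ e, pairedColoring φ ω' v = pairedColoring φ ω v := fun v hv => by
    simp [pairedColoring, h _ (mem_image_of_mem _ hv)]
  simp only [monochromatic, mem_filter, mem_univ, true_and] at hω ⊢
  intro v hv w hw
  rw [hagree v hv, hagree w hw, hω v hv w hw]

theorem injOn_fst_of_mem_monochromatic {e : Finset V} {ω : κ → Bool}
    (hω : ω ∈ monochromatic φ e) : Set.InjOn (fun v => (φ v).1) e := by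
  intro v hv w hw hvw
  have h := (mem_filter.1 hω).2 v hv w hw
  simp only [pairedColoring] at h hvw
  rw [hvw, Bool.xor_right_inj] at h
  exact φ.injective (Prod.ext hvw h)

theorem card_monochromatic_mul_pow_le (e : Finset V) :
    #(monochromatic φ e) * 2 ^ #e ≤ 2 * 2 ^ Fintype.card κ := by
  rcases (monochromatic φ e).eq_empty_or_nonempty with h | ⟨ω₀, hω₀⟩
  · simp [h]
  rcases e.eq_empty_or_nonempty with rfl | ⟨v₀, hv₀⟩
  · have := card_le_univ (monochromatic φ (∅ : Finset V))
    simp only [Fintype.card_fun, Fintype.card_bool] at this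
    simp only [card_empty, pow_zero, mul_one]
    omega
  -- on `pairIndices φ e`, every monochromatic `ω` is `ω₀` or its negation
  have hsub : monochromatic φ e ⊆ univ.biUnion fun c : Bool =>
      ({ω | ∀ i ∈ pairIndices φ e, ω i = xor (ω₀ i) c} : Finset (κ → Bool)) := by
    intro ω hω
    simp only [mem_biUnion, mem_univ, true_and, mem_filter]
    refine ⟨xor (ω (φ v₀).1) (ω₀ (φ v₀).1), fun i hi => ?_⟩
    obtain ⟨v, hv, rfl⟩ := mem_image.1 hi
    have h := (mem_filter.1 hω).2 v hv v₀ hv₀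
    have h₀ := (mem_filter.1 hω₀).2 v hv v₀ hv₀
    simp only [pairedColoring] at h h₀
    revert h h₀
    cases ω (φ v).1 <;> cases ω₀ (φ v).1 <;> cases ω (φ v₀).1 <;> cases ω₀ (φ v₀).1 <;>
      cases (φ v).2 <;> cases (φ v₀).2 <;> decide
  have hcard : #(pairIndices φ e) = #e :=
    card_image_of_injOn (injOn_fst_of_mem_monochromatic hω₀)
  calc #(monochromatic φ e) * 2 ^ #e
      ≤ (∑ c : Bool, #({ω | ∀ i ∈ pairIndices φ e, ω i = xor (ω₀ i) c} : Finset (κ → Bool)))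
        * 2 ^ #(pairIndices φ e) := by
        rw [hcard]; gcongr; exact (card_le_card hsub).trans card_biUnion_le
    _ = 2 * 2 ^ Fintype.card κ := by
        have h := fun c : Bool => card_filter_eqOn_mul_pow (pairIndices φ e) fun i => xor (ω₀ i) c
        simp only [Fintype.card_bool] at h
        simp only [sum_mul, h, sum_const, card_univ, Fintype.card_bool, smul_eq_mul]

theorem card_monochromatic_inter_avoiding_mul {ι : Type*} [DecidableEq ι] (edge : ι → Finset V)
    (e : Finset V) (S : Finset ι)
    (hS : ∀ j ∈ S, Disjoint (pairIndices φ e) (pairIndices φ (edge j))) :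
    #(monochromatic φ e ∩ LocalLemma.avoiding (fun j => monochromatic φ (edge j)) S)
        * Fintype.card (κ → Bool)
      = #(monochromatic φ e) * #(LocalLemma.avoiding (fun j => monochromatic φ (edge j)) S) := by
  refine card_inter_mul_card_eq_of_dependsOn (pairIndices φ e) _ _
    (fun ω ω' h => mem_monochromatic_of_eqOn h) fun ω ω' h hω => ?_
  simp only [LocalLemma.avoiding, mem_filter, mem_univ, true_and] at hω ⊢
  refine fun j hj hω'j => hω j hj (mem_monochromatic_of_eqOn (fun i hi => ?_) hω'j)
  exact (h i (disjoint_right.1 (hS j hj) hi)).symm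

end PairedColoring

open LocalLemma in
theorem exists_forall_notMem_monochromatic {V κ : Type*} [DecidableEq V] [Fintype κ]
    [DecidableEq κ] (φ : V ≃ κ × Bool) (E : Finset (Finset V))
    {n D : ℕ} (hn : 1 ≤ n) (hunif : ∀ e ∈ E, #e = n) (hdeg : ∀ v, #{f ∈ E | v ∈ f} ≤ D)
    (hD : Real.exp 1 * 4 * n * D ≤ 2 ^ n) :
    ∃ ω : κ → Bool, ∀ e ∈ E, ω ∉ monochromatic φ e := by
  let A (e : E) : Finset (κ → Bool) := monochromatic φ e
  let Γ (e : E) : Finset E :=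
    {f ∈ E | ¬Disjoint (pairIndices φ e) (pairIndices φ f)}.subtype (· ∈ E)
  have hnonempty : ∀ e ∈ E, e.Nonempty := fun e he => card_pos.1 (hunif e he ▸ hn)
  have hnD : ∀ e ∈ E, 1 ≤ 2 * n * D := fun e he => by
    obtain ⟨v, hv⟩ := hnonempty e he
    have : 1 ≤ #{f ∈ E | v ∈ f} := card_pos.2 ⟨e, mem_filter.2 ⟨he, hv⟩⟩
    nlinarith [hdeg v]
  refine (exists_forall_notMem_of_exp_mul_le (A := A) (Γ := Γ) (d := 2 * n * D - 1)
    (fun e => ?_) (fun e => ?_) (fun e S hS => ?_)).imp fun ω hω e he => hω ⟨e, he⟩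
  · have hself : e ∈ Γ e := mem_subtype.2 <| mem_filter.2
      ⟨e.2, not_disjoint_iff_nonempty_inter.2 (by simpa [pairIndices] using hnonempty e e.2)⟩
    have hcard : #(Γ e) ≤ 2 * n * D := by
      rw [card_subtype, filter_true_of_mem fun f hf => (mem_filter.1 hf).1, ← hunif e e.2]
      exact card_filter_not_disjoint_pairIndices_le E e hdeg
    rw [card_erase_of_mem hself]
    omega
  · have hd : ((2 * n * D - 1 : ℕ) : ℝ) + 1 = 2 * n * D := by
      exact_mod_cast Nat.sub_add_cancel (hnD e e.2)
    have hmono : (#(A e) : ℝ) * 2 ^ n ≤ 2 * 2 ^ Fintype.card κ := by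
      exact_mod_cast hunif e e.2 ▸ card_monochromatic_mul_pow_le (e : Finset V)
    rw [hd, Fintype.card_fun, Fintype.card_bool, Nat.cast_pow, Nat.cast_ofNat]
    nlinarith [mul_le_mul_of_nonneg_right hD (Nat.cast_nonneg (α := ℝ) #(A e))]
  · refine le_of_eq ?_
    exact_mod_cast card_monochromatic_inter_avoiding_mul Subtype.val e S fun f hf => by
      by_contra h
      exact disjoint_left.1 hS hf (mem_subtype.2 (mem_filter.2 ⟨f.2, h⟩))

/-- Every `n`-uniform hypergraph with an even number of vertices and maximum
degree at most `2^(n-2)/(e·n)` has a proper halving 2-coloring: no hyperedge is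
monochromatic and the two color classes have equal size. -/
theorem proper_halving_coloring {V : Type} [Fintype V] [DecidableEq V]
    (n : ℕ) (hn : 1 ≤ n) (E : Finset (Finset V))
    (hunif : ∀ e ∈ E, e.card = n) (heven : Even (Fintype.card V))
    (hdeg : ∀ v : V, ((E.filter fun e => v ∈ e).card : ℝ)
      ≤ (2 : ℝ) ^ ((n : ℤ) - 2) / (Real.exp 1 * n)) :
    ∃ c : V → Bool,
      (∀ e ∈ E, ∃ v ∈ e, ∃ w ∈ e, c v ≠ c w) ∧
      (Finset.univ.filter fun v => c v = true).card
        = (Finset.univ.filter fun v => c v = false).card := by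
  obtain ⟨k, hk⟩ := heven
  let φ : V ≃ Fin k × Bool := Fintype.equivOfCardEq <| by
    rw [hk, Fintype.card_prod, Fintype.card_fin, Fintype.card_bool, mul_two]
  set D := ⌊(2 : ℝ) ^ ((n : ℤ) - 2) / (Real.exp 1 * n)⌋₊
  have hD : Real.exp 1 * 4 * n * D ≤ 2 ^ n := by
    have hn' : (0 : ℝ) < n := by exact_mod_cast hn
    calc Real.exp 1 * 4 * n * D ≤ Real.exp 1 * 4 * n * (2 ^ ((n : ℤ) - 2) / (Real.exp 1 * n)) := by
          gcongr; exact Nat.floor_le (by positivity)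
      _ = 2 ^ n := by
          rw [zpow_sub₀ two_ne_zero, zpow_natCast]; field_simp; norm_num
  obtain ⟨ω, hω⟩ := exists_forall_notMem_monochromatic φ E hn hunif
    (fun v => Nat.le_floor (hdeg v)) hD
  refine ⟨pairedColoring φ ω, fun e he => ?_, card_pairedColoring_true φ ω⟩
  simpa [monochromatic] using hω e he
end
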